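/- Let φ be a (3,B2)-SAT instance with variables x_1, …, x_n and clauses C_1, …, C_m, each clause containing exactly 3 literals, and each variable occurring exactly twice as a positive literal and exactly twice as a negative literal. Define h(x_i) = z_i and h(¬x_i) = z̄_i. Construct the BNPG game with symmetric altruism: V = {z_i, z̄_i, b_i : i∈[n]} ∪ {y_j : j∈[m]}; E = {{y_j, h(l^j_1)}, {y_j, h(l^j_2)}, {y_j, h(l^j_3)} : C_j = (l^j_1 ∨ l^j_2 ∨ l^j_3), j∈[m]} ∪ {{z_i, b_i}, {b_i, z̄_i} : i∈[n]}; a = 2; c_v = 15 for all v ∈ V; g_{y_j}(x) = x, g_{z_i}(x) = g_{z̄_i}(x) = 10x, g_{b_i}(x) = 2x. Let the target profile x* be given by x*_{y_j} = 1 for all j, x*_{b_i} = 1 and x*_{z_i} = x*_{z̄_i} = 0 for all i. Then φ is satisfiable if and only if there exists a set E'' of undirected edges, each edge of E'' being an edge of E, such that x* is a pure strategy Nash equilibrium of the BNPG game with symmetric altruism (G, (V,E''), (g_v), (c_v), 2). -/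

import Mathlib

open Finset

/-- `Δg(t) = g(t+1) - g(t)`. -/
def dg (g : ℕ → ℝ) (t : ℕ) : ℝ := g (t + 1) - g t

/-- Number of `G`-neighbors of `v` playing 1 in the profile `x`. -/
def nv {W : Type*} [Fintype W] [DecidableEq W] (G : SimpleGraph W) [DecidableRel G.Adj]
    (x : W → Bool) (v : W) : ℕ :=
  ((G.neighborFinset v).filter (fun u => x u = true)).card

/-- Utility of player `v` in a BNPG game with altruism: input graph `G`,
altruistic (out-)neighborhoods `N`, externality functions `g`, costs `c`,
altruism parameter `a`. -/
def util {W : Type*} [Fintype W] [DecidableEq W] (G : SimpleGraph W) [DecidableRel G.Adj]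
    (N : W → Finset W) (g : W → ℕ → ℝ) (c : W → ℝ) (a : ℝ)
    (x : W → Bool) (v : W) : ℝ :=
  g v ((x v).toNat + nv G x v)
    + a * ∑ u ∈ N v, g u ((x u).toNat + nv G x u)
    - c v * (x v).toNat

/-- Pure strategy Nash equilibrium of a BNPG game with altruism. -/
def isPSNE {W : Type*} [Fintype W] [DecidableEq W] (G : SimpleGraph W) [DecidableRel G.Adj]
    (N : W → Finset W) (g : W → ℕ → ℝ) (c : W → ℝ) (a : ℝ) (x : W → Bool) : Prop :=
  ∀ v : W, ∀ b : Bool,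
    util G N g c a x v ≥ util G N g c a (Function.update x v b) v

/-- Vertex set of the (3,B2)-SAT reduction: `Sum.inl (i, 0)` is `z_i`,
`Sum.inl (i, 1)` is `z̄_i`, `Sum.inl (i, 2)` is `b_i`, and `Sum.inr j` is `y_j`. -/
abbrev VS (nn m : ℕ) := (Fin nn × Fin 3) ⊕ Fin m

/-- `h` maps the literal `(i, true) = x_i` to `z_i = Sum.inl (i, 0)` and the literal
`(i, false) = ¬x_i` to `z̄_i = Sum.inl (i, 1)`. -/
def litV {nn m : ℕ} (l : Fin nn × Bool) : VS nn m :=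
  Sum.inl (l.1, if l.2 then (0 : Fin 3) else 1)

/-- Adjacency of the input network of the SAT reduction: each clause vertex `y_j` is
adjacent to the vertices of its three literals, and each `b_i` is adjacent to `z_i`
and `z̄_i`. -/
def adjS {nn m : ℕ} (Cl : Fin m → Fin 3 → Fin nn × Bool) : VS nn m → VS nn m → Bool
  | Sum.inr j, Sum.inl w => decide (∃ k : Fin 3, litV (Cl j k) = (Sum.inl w : VS nn m))
  | Sum.inl w, Sum.inr j => decide (∃ k : Fin 3, litV (Cl j k) = (Sum.inl w : VS nn m))
  | Sum.inl (i, t), Sum.inl (i', t') =>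
      decide (i = i') &&
        ((decide (t = 2) && (decide (t' = 0) || decide (t' = 1))) ||
         (decide (t' = 2) && (decide (t = 0) || decide (t = 1))))
  | _, _ => false

/-- The input network of the SAT reduction (maximum degree 3). -/
def GS {nn m : ℕ} (Cl : Fin m → Fin 3 → Fin nn × Bool) : SimpleGraph (VS nn m) where
  Adj a b := adjS Cl a b = true
  symm := by
    constructor
    rintro (⟨i, t⟩ | j) (⟨i', t'⟩ | j') h <;> simp_all [adjS] <;> tauto
  loopless := by
    constructor
    rintro (⟨i, t⟩ | j) h <;> simp [adjS] at h
    omega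

instance {nn m : ℕ} (Cl : Fin m → Fin 3 → Fin nn × Bool) :
    DecidableRel (GS Cl).Adj :=
  fun a b => inferInstanceAs (Decidable (adjS Cl a b = true))

/-- Externality functions: `g_{y_j}(x) = x`, `g_{z_i}(x) = g_{z̄_i}(x) = 10x`,
`g_{b_i}(x) = 2x`. -/
def gS {nn m : ℕ} : VS nn m → ℕ → ℝ
  | Sum.inl (_, t) => fun x => if t = 2 then 2 * x else 10 * x
  | Sum.inr _ => fun x => (x : ℝ)

/-! With linear externalities `g_v(k) = λ_v k`, switching `x_v` changes `U_v` by
`±(λ_v + 2 ∑_{u ∈ N(v)} λ_u - 15)`, so the target profile is an equilibrium exactly when the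
altruistic weight `∑_{u ∈ N(v)} λ_u` is at least `7` at each `y_j`, at least `13/2` at each `b_i`,
and at most `5/2` at each literal vertex. Thus every `y_j` must care for a literal vertex of its
clause, every `b_i` for one of `z_i, z̄_i`, and no literal vertex can be tied to both `b_i` and a
clause vertex: choosing `x_i` so that a literal vertex tied to `b_i` is false, the literal vertex
each `y_j` is tied to is true. Conversely, tie each clause vertex to one true literal and each
`b_i` to its false literal; a true literal vertex then carries at most two clause vertices, as
`x_i` occurs only twice with each sign. -/
section LinearGame

variable {W : Type*} [Fintype W] [DecidableEq W] (G : SimpleGraph W) [DecidableRel G.Adj]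

lemma nv_update_self (x : W → Bool) (v : W) (b : Bool) :
    nv G (Function.update x v b) v = nv G x v := by
  unfold nv
  congr 1
  refine filter_congr fun u hu => ?_
  rw [Function.update_of_ne (G.ne_of_adj ((G.mem_neighborFinset v u).1 hu)).symm]

lemma nv_update_add {u v : W} (h : G.Adj u v) (x : W → Bool) (b : Bool) :
    nv G (Function.update x v b) u + (x v).toNat = nv G x u + b.toNat := by
  have hv : v ∈ G.neighborFinset u := (G.mem_neighborFinset u v).2 h
  have split : ∀ y : W → Bool,
      nv G y u = (y v).toNat + ∑ w ∈ (G.neighborFinset u).erase v, (y w).toNat := by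
    intro y
    rw [nv, card_filter, add_sum_erase _ (fun w => (y w).toNat) hv]
    exact sum_congr rfl fun w _ => by cases y w <;> rfl
  have hrest : ∑ w ∈ (G.neighborFinset u).erase v, (Function.update x v b w).toNat
      = ∑ w ∈ (G.neighborFinset u).erase v, (x w).toNat :=
    sum_congr rfl fun w hw => by rw [Function.update_of_ne (ne_of_mem_erase hw)]
  rw [split, split x, hrest, Function.update_self]
  omega

variable (N : W → Finset W) (lam c : W → ℝ) (a : ℝ)

lemma util_sub_util_update {v : W} (hN : ∀ u ∈ N v, G.Adj v u) (x : W → Bool) (b : Bool) :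
    util G N (fun w k => lam w * k) c a x v
        - util G N (fun w k => lam w * k) c a (Function.update x v b) v
      = (((x v).toNat : ℝ) - b.toNat) * (lam v + a * ∑ u ∈ N v, lam u - c v) := by
  have hterm : ∀ u ∈ N v,
      lam u * (((Function.update x v b u).toNat + nv G (Function.update x v b) u : ℕ) : ℝ)
        = lam u * (((x u).toNat + nv G x u : ℕ) : ℝ)
          + lam u * ((b.toNat : ℝ) - (x v).toNat) := by
    intro u hu
    have hne : u ≠ v := (G.ne_of_adj (hN u hu)).symm
    have hcount : ((nv G (Function.update x v b) u + (x v).toNat : ℕ) : ℝ)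
        = ((nv G x u + b.toNat : ℕ) : ℝ) := congrArg _ (nv_update_add G (hN u hu).symm x b)
    rw [Function.update_of_ne hne]
    push_cast at hcount ⊢
    linear_combination lam u * hcount
  unfold util
  rw [sum_congr rfl hterm, sum_add_distrib, ← sum_mul,
    Function.update_self, nv_update_self]
  push_cast
  ring

lemma isPSNE_linear_iff (hN : ∀ v, ∀ u ∈ N v, G.Adj v u) (x : W → Bool) :
    isPSNE G N (fun w k => lam w * k) c a x ↔
      ∀ v, (x v = true → c v ≤ lam v + a * ∑ u ∈ N v, lam u) ∧
        (x v = false → lam v + a * ∑ u ∈ N v, lam u ≤ c v) := by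
  unfold isPSNE
  refine forall_congr' fun v => ?_
  have hdiff : ∀ b, util G N (fun w k => lam w * k) c a (Function.update x v b) v
        ≤ util G N (fun w k => lam w * k) c a x v ↔
      0 ≤ (((x v).toNat : ℝ) - b.toNat) * (lam v + a * ∑ u ∈ N v, lam u - c v) := by
    intro b
    rw [← sub_nonneg, util_sub_util_update G N lam c a (hN v)]
  simp only [ge_iff_le, hdiff, Bool.forall_bool]
  cases x v <;> simp

end LinearGame

lemma card_filter_apply_choice_le {ι κ α : Type*} [Fintype ι] [Fintype κ] [DecidableEq α]
    (C : ι → κ → α) (k : ι → κ) (a : α) :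
    #{i | C i (k i) = a} ≤ #{p : ι × κ | C p.1 p.2 = a} :=
  card_le_card_of_injOn (fun i => (i, k i)) (fun i hi => by simpa using hi)
    (fun _ _ _ _ h => congrArg Prod.fst h)

section Reduction

variable {nn m : ℕ}

def targetS : VS nn m → Bool
  | Sum.inl (_, t) => decide (t = 2)
  | Sum.inr _ => true

def slopeS : VS nn m → ℝ
  | Sum.inl (_, t) => if t = 2 then 2 else 10
  | Sum.inr _ => 1

lemma gS_eq : (gS : VS nn m → ℕ → ℝ) = fun v (k : ℕ) => slopeS v * k := by
  funext v k
  rcases v with ⟨i, t⟩ | j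
  · simp only [gS, slopeS]
    split_ifs <;> ring
  · simp [gS, slopeS]

lemma slopeS_nonneg (v : VS nn m) : 0 ≤ slopeS v := by
  rcases v with ⟨i, t⟩ | j <;> simp only [slopeS] <;> positivity

lemma litV_injective : Function.Injective (litV : Fin nn × Bool → VS nn m) := by
  rintro ⟨i, s⟩ ⟨i', s'⟩ h
  cases s <;> cases s' <;> simp_all [litV]

lemma litV_ne_inl_two (l : Fin nn × Bool) (i : Fin nn) :
    (litV l : VS nn m) ≠ Sum.inl (i, 2) := by
  rcases l with ⟨i', s⟩
  cases s <;> simp [litV]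

@[simp] lemma targetS_litV (l : Fin nn × Bool) : targetS (litV l : VS nn m) = false := by
  rcases l with ⟨i, s⟩
  cases s <;> simp [litV, targetS]

@[simp] lemma slopeS_litV (l : Fin nn × Bool) : slopeS (litV l : VS nn m) = 10 := by
  rcases l with ⟨i, s⟩
  cases s <;> simp [litV, slopeS]

lemma vertex_cases (v : VS nn m) :
    (∃ j, v = Sum.inr j) ∨ (∃ i, v = Sum.inl (i, 2)) ∨ ∃ l, v = litV l := by
  rcases v with ⟨i, t⟩ | j
  · fin_cases t
    · exact Or.inr (Or.inr ⟨(i, true), rfl⟩)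
    · exact Or.inr (Or.inr ⟨(i, false), rfl⟩)
    · exact Or.inr (Or.inl ⟨i, rfl⟩)
  · exact Or.inl ⟨j, rfl⟩

variable (Cl : Fin m → Fin 3 → Fin nn × Bool)

lemma GS_adj_inr_iff {j : Fin m} {u : VS nn m} :
    (GS Cl).Adj (Sum.inr j) u ↔ ∃ k, litV (Cl j k) = u := by
  rcases u with w | j'
  · exact decide_eq_true_iff
  · simp [GS, adjS, litV]

lemma GS_adj_inl_two_iff {i : Fin nn} {u : VS nn m} :
    (GS Cl).Adj (Sum.inl (i, 2)) u ↔ ∃ s, litV (i, s) = u := by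
  rcases u with ⟨i', t⟩ | j
  · change adjS Cl _ _ = true ↔ _
    fin_cases t <;> simp [adjS, litV, eq_comm]
  · change adjS Cl _ _ = true ↔ _
    simp only [adjS, decide_eq_true_eq]
    exact ⟨fun ⟨k, hk⟩ => absurd hk (litV_ne_inl_two _ _),
      fun ⟨s, hs⟩ => by simp [litV] at hs⟩

lemma isPSNE_targetS_iff (N : VS nn m → Finset (VS nn m))
    (hN : ∀ v, ∀ u ∈ N v, (GS Cl).Adj v u) :
    isPSNE (GS Cl) N gS (fun _ => 15) 2 targetS ↔
      (∀ j, 15 ≤ 1 + 2 * ∑ u ∈ N (Sum.inr j), slopeS u) ∧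
      (∀ i, 15 ≤ 2 + 2 * ∑ u ∈ N (Sum.inl (i, 2)), slopeS u) ∧
      ∀ l, 10 + 2 * ∑ u ∈ N (litV l), slopeS u ≤ 15 := by
  rw [gS_eq, isPSNE_linear_iff _ _ _ _ _ hN]
  constructor
  · intro h
    exact ⟨fun j => (h (Sum.inr j)).1 rfl, fun i => (h (Sum.inl (i, 2))).1 rfl,
      fun l => by simpa using (h (litV l)).2 (targetS_litV l)⟩
  · rintro ⟨hy, hb, hz⟩ v
    rcases vertex_cases v with ⟨j, rfl⟩ | ⟨i, rfl⟩ | ⟨l, rfl⟩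
    · exact ⟨fun _ => hy j, fun h => absurd h (by simp [targetS])⟩
    · exact ⟨fun _ => hb i, fun h => absurd h (by simp [targetS])⟩
    · exact ⟨fun h => absurd h (by simp), fun _ => by simpa using hz l⟩

end Reduction

section SatNet

variable {nn m : ℕ} (Cl : Fin m → Fin 3 → Fin nn × Bool) (f : Fin nn → Bool)
  (k : Fin m → Fin 3)

def satArc : VS nn m → VS nn m → Prop
  | Sum.inr j, u => u = litV (Cl j (k j))
  | Sum.inl (i, t), u => t = 2 ∧ u = litV (i, !f i)

open Classical in
noncomputable def satNet (v : VS nn m) : Finset (VS nn m) :=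
  {u | satArc Cl f k v u ∨ satArc Cl f k u v}

variable {Cl f k}

lemma mem_satNet {u v : VS nn m} :
    u ∈ satNet Cl f k v ↔ satArc Cl f k v u ∨ satArc Cl f k u v := by
  simp [satNet]

lemma mem_satNet_comm (u v : VS nn m) : u ∈ satNet Cl f k v ↔ v ∈ satNet Cl f k u := by
  simp only [mem_satNet, or_comm]

lemma GS_adj_of_satArc {u v : VS nn m} (h : satArc Cl f k v u) : (GS Cl).Adj v u := by
  rcases v with ⟨i, t⟩ | j
  · obtain ⟨rfl, rfl⟩ := h
    exact (GS_adj_inl_two_iff Cl).2 ⟨_, rfl⟩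
  · exact (GS_adj_inr_iff Cl).2 ⟨k j, h.symm⟩

lemma GS_adj_of_mem_satNet {u v : VS nn m} (h : u ∈ satNet Cl f k v) : (GS Cl).Adj v u :=
  (mem_satNet.1 h).elim GS_adj_of_satArc fun h => (GS_adj_of_satArc h).symm

lemma mem_satNet_litV {i : Fin nn} {s : Bool} {u : VS nn m} :
    u ∈ satNet Cl f k (litV (i, s)) ↔
      (u = Sum.inl (i, 2) ∧ s = !f i) ∨ ∃ j, u = Sum.inr j ∧ Cl j (k j) = (i, s) := by
  have hout : ¬ satArc Cl f k (litV (i, s)) u := by cases s <;> simp [litV, satArc]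
  rw [mem_satNet, or_iff_right hout]
  rcases u with ⟨i', t⟩ | j
  · simp only [satArc, litV_injective.eq_iff, Prod.mk.injEq, Sum.inl.injEq, Sum.inl_ne_inr,
      false_and, exists_false, or_false]
    grind
  · simp [satArc, litV_injective.eq_iff, eq_comm]

lemma sum_slopeS_satNet_litV_le (hk : ∀ j, f (Cl j (k j)).1 = (Cl j (k j)).2)
    (hocc : ∀ l, #{p : Fin m × Fin 3 | Cl p.1 p.2 = l} ≤ 2) (l : Fin nn × Bool) :
    ∑ u ∈ satNet Cl f k (litV l), slopeS u ≤ 2 := by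
  obtain ⟨i, s⟩ := l
  by_cases hs : s = f i
  · have hsub :
        satNet Cl f k (litV (i, s)) ⊆ ({j | Cl j (k j) = (i, s)} : Finset (Fin m)).map .inr := by
      intro u hu
      rcases mem_satNet_litV.1 hu with ⟨-, hs'⟩ | ⟨j, rfl, hj⟩
      · cases hfi : f i <;> simp_all
      · simp [hj]
    calc ∑ u ∈ satNet Cl f k (litV (i, s)), slopeS u
        ≤ ∑ u ∈ ({j | Cl j (k j) = (i, s)} : Finset (Fin m)).map .inr, slopeS u :=
          sum_le_sum_of_subset_of_nonneg hsub fun u _ _ => slopeS_nonneg u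
      _ = #{j | Cl j (k j) = (i, s)} := by simp [slopeS]
      _ ≤ 2 := by exact_mod_cast (card_filter_apply_choice_le Cl k (i, s)).trans (hocc _)
  · have hsub : satNet Cl f k (litV (i, s)) ⊆ {Sum.inl (i, 2)} := by
      intro u hu
      rcases mem_satNet_litV.1 hu with ⟨rfl, -⟩ | ⟨j, -, hj⟩
      · exact mem_singleton_self _
      · exact absurd (by simpa [hj] using hk j : f i = s).symm hs
    calc ∑ u ∈ satNet Cl f k (litV (i, s)), slopeS u
        ≤ ∑ u ∈ {Sum.inl (i, 2)}, slopeS u :=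
          sum_le_sum_of_subset_of_nonneg hsub fun u _ _ => slopeS_nonneg u
      _ = 2 := by simp [slopeS]

lemma satNet_isPSNE (hk : ∀ j, f (Cl j (k j)).1 = (Cl j (k j)).2)
    (hocc : ∀ l, #{p : Fin m × Fin 3 | Cl p.1 p.2 = l} ≤ 2) :
    isPSNE (GS Cl) (satNet Cl f k) gS (fun _ => 15) 2 targetS := by
  rw [isPSNE_targetS_iff Cl _ fun v u => GS_adj_of_mem_satNet]
  have hten : ∀ {v u : VS nn m}, u ∈ satNet Cl f k v → slopeS u = 10 →
      10 ≤ ∑ w ∈ satNet Cl f k v, slopeS w := fun hu h =>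
    h ▸ single_le_sum (fun w _ => slopeS_nonneg w) hu
  refine ⟨fun j => ?_, fun i => ?_, fun l => ?_⟩
  · have hmem : litV (Cl j (k j)) ∈ satNet Cl f k (.inr j) := mem_satNet.2 (Or.inl rfl)
    linarith [hten hmem (slopeS_litV _)]
  · have hmem : litV (i, !f i) ∈ satNet Cl f k (.inl (i, 2)) :=
      mem_satNet.2 (Or.inl ⟨rfl, rfl⟩)
    linarith [hten hmem (slopeS_litV _)]
  · linarith [sum_slopeS_satNet_litV_le hk hocc l]

end SatNet

lemma satisfiable_of_isPSNE {nn m : ℕ} (Cl : Fin m → Fin 3 → Fin nn × Bool)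
    (N : VS nn m → Finset (VS nn m)) (hN : ∀ v, ∀ u ∈ N v, (GS Cl).Adj v u)
    (hsymm : ∀ u v, u ∈ N v ↔ v ∈ N u)
    (hP : isPSNE (GS Cl) N gS (fun _ => 15) 2 targetS) :
    ∃ f : Fin nn → Bool, ∀ j, ∃ k, f (Cl j k).1 = (Cl j k).2 := by
  obtain ⟨hy, hb, hz⟩ := (isPSNE_targetS_iff Cl N hN).1 hP
  have hclause : ∀ j, ∃ k, litV (Cl j k) ∈ N (Sum.inr j) := by
    intro j
    obtain ⟨u, hu⟩ := nonempty_of_sum_ne_zero (s := N (.inr j)) (f := slopeS) fun h => by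
      linarith [hy j]
    obtain ⟨k, rfl⟩ := (GS_adj_inr_iff Cl).1 (hN _ _ hu)
    exact ⟨k, hu⟩
  have hvar : ∀ i, ∃ s, litV (i, s) ∈ N (Sum.inl (i, 2)) := by
    intro i
    obtain ⟨u, hu⟩ := nonempty_of_sum_ne_zero (s := N (.inl (i, 2))) (f := slopeS) fun h => by
      linarith [hb i]
    obtain ⟨s, rfl⟩ := (GS_adj_inl_two_iff Cl).1 (hN _ _ hu)
    exact ⟨s, hu⟩
  have hexcl : ∀ l j, Sum.inr j ∈ N (litV l) → Sum.inl (l.1, 2) ∉ N (litV l) := by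
    intro l j hj hbl
    have hpair : slopeS (Sum.inl (l.1, 2) : VS nn m) + slopeS (Sum.inr j : VS nn m)
        ≤ ∑ u ∈ N (litV l), slopeS u := by
      rw [← sum_pair Sum.inl_ne_inr]
      exact sum_le_sum_of_subset_of_nonneg (insert_subset hbl (singleton_subset_iff.2 hj))
        fun u _ _ => slopeS_nonneg u
    have hval : slopeS (Sum.inl (l.1, 2) : VS nn m) + slopeS (Sum.inr j : VS nn m) = 3 := by
      norm_num [slopeS]
    linarith [hz l]
  refine ⟨fun i => decide (litV (i, false) ∈ N (Sum.inl (i, 2))), fun j => ?_⟩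
  obtain ⟨k, hk⟩ := hclause j
  refine ⟨k, ?_⟩
  rcases hCl : Cl j k with ⟨i, s⟩
  rw [hCl] at hk
  have hnot : litV (i, s) ∉ N (Sum.inl (i, 2)) := fun h =>
    hexcl (i, s) j ((hsymm _ _).1 hk) ((hsymm _ _).1 h)
  cases s
  · simpa using hnot
  · obtain ⟨s', hs'⟩ := hvar i
    cases s'
    · simpa using hs'
    · exact absurd hs' hnot

/-- correctness of the (3,B2)-SAT reduction. The formula (clauses
`Cl`, each variable occurring exactly twice positively and twice negatively) is
satisfiable iff there is an undirected altruistic network (a symmetric neighborhood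
system whose edges join `G`-adjacent vertices) making the target profile — all `y_j`
and all `b_i` invest, no `z_i` or `z̄_i` invests — a PSNE of the constructed BNPG
game with symmetric altruism (costs all `15`, altruism parameter `a = 2`). -/
theorem statement16 (nn m : ℕ) (Cl : Fin m → Fin 3 → Fin nn × Bool)
    (hpos : ∀ v : Fin nn,
      (Finset.univ.filter (fun jk : Fin m × Fin 3 => Cl jk.1 jk.2 = (v, true))).card = 2)
    (hneg : ∀ v : Fin nn,
      (Finset.univ.filter (fun jk : Fin m × Fin 3 => Cl jk.1 jk.2 = (v, false))).card = 2) :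
    (∃ f : Fin nn → Bool, ∀ j : Fin m, ∃ k : Fin 3, f (Cl j k).1 = (Cl j k).2) ↔
    (∃ N : VS nn m → Finset (VS nn m),
      (∀ v : VS nn m, ∀ u ∈ N v, (GS Cl).Adj v u) ∧
      (∀ u v : VS nn m, u ∈ N v ↔ v ∈ N u) ∧
      isPSNE (GS Cl) N gS (fun _ => 15) 2
        (fun v => match v with
          | Sum.inl (_, t) => decide (t = 2)
          | Sum.inr _ => true)) := by
  constructor
  · rintro ⟨f, hf⟩
    choose k hk using hf
    have hocc : ∀ l, #{p : Fin m × Fin 3 | Cl p.1 p.2 = l} ≤ 2 := by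
      rintro ⟨i, _ | _⟩
      exacts [(hneg i).le, (hpos i).le]
    exact ⟨satNet Cl f k, fun _ _ => GS_adj_of_mem_satNet, mem_satNet_comm,
      satNet_isPSNE hk hocc⟩
  · rintro ⟨N, hN, hsymm, hP⟩
    exact satisfiable_of_isPSNE Cl N hN hsymm hP
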